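/- Let c₁, c₂, c₃, c₄ ∈ ℝ and let u be a solution of the hyperbolic Euler–Darboux equation on an open set U ⊆ ℝ² with ξ + η ≠ 0 on U. Then the function v(ξ,η) = (c₁·(η−ξ)/2 + c₄)·u + (−c₁ξ² + c₂ξ − c₃)·u_ξ + (c₁η² + c₂η + c₃)·u_η is also a solution of the hyperbolic Euler–Darboux equation on U. -/

import Mathlib

/-- Partial derivative of a real-valued function on `ℝ²` in the direction `v`. -/
noncomputable def pdv (v : ℝ × ℝ) (f : ℝ × ℝ → ℝ) : ℝ × ℝ → ℝ := fun p => fderiv ℝ f p v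

/-- Partial derivative with respect to the first coordinate (`ξ`). -/
noncomputable def px : (ℝ × ℝ → ℝ) → ℝ × ℝ → ℝ := pdv (1, 0)

/-- Partial derivative with respect to the second coordinate (`η`). -/
noncomputable def py : (ℝ × ℝ → ℝ) → ℝ × ℝ → ℝ := pdv (0, 1)

/-- `u` is a solution of the hyperbolic Euler–Darboux equation
`2(ξ+η)u_ξη + u_ξ + u_η = 0` on `U`. -/
def IsHypEDSolution (U : Set (ℝ × ℝ)) (u : ℝ × ℝ → ℝ) : Prop :=
  ContDiffOn ℝ (⊤ : ℕ∞) u U ∧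
    ∀ p ∈ U, 2 * (p.1 + p.2) * py (px u) p + px u p + py u p = 0

lemma pdv_const (v : ℝ × ℝ) (c : ℝ) (p : ℝ × ℝ) : pdv v (fun _ => c) p = 0 := by
  simp [pdv]

lemma pdv_congr_nhds {f g : ℝ × ℝ → ℝ} {p : ℝ × ℝ} (v : ℝ × ℝ)
    (h : f =ᶠ[nhds p] g) : pdv v f p = pdv v g p := by
  simp only [pdv, h.fderiv_eq]

/-- `pdv` of a simple polynomial. -/
lemma pdv_poly2 (α β γ δ ε : ℝ) (q v : ℝ × ℝ) :
    pdv v (fun r : ℝ × ℝ => α * (r.1 * r.1) + β * (r.2 * r.2) + γ * r.1 + δ * r.2 + ε) q =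
      (2 * α * q.1 + γ) * v.1 + (2 * β * q.2 + δ) * v.2 := by
  have H : HasFDerivAt
      (fun r : ℝ × ℝ => α * (r.1 * r.1) + β * (r.2 * r.2) + γ * r.1 + δ * r.2 + ε)
      (α • (q.1 • ContinuousLinearMap.fst ℝ ℝ ℝ + q.1 • ContinuousLinearMap.fst ℝ ℝ ℝ) +
        β • (q.2 • ContinuousLinearMap.snd ℝ ℝ ℝ + q.2 • ContinuousLinearMap.snd ℝ ℝ ℝ) +
        γ • ContinuousLinearMap.fst ℝ ℝ ℝ + δ • ContinuousLinearMap.snd ℝ ℝ ℝ) q :=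
    (((((hasFDerivAt_fst.mul hasFDerivAt_fst).const_mul α).add
        ((hasFDerivAt_snd.mul hasFDerivAt_snd).const_mul β)).add
        (hasFDerivAt_fst.const_mul γ)).add (hasFDerivAt_snd.const_mul δ)).add_const ε
  simp only [pdv]
  rw [H.fderiv]
  simp [ContinuousLinearMap.smul_apply, smul_eq_mul]
  ring

/-- Sum of three products rule. -/
lemma pdv_comb3 {a b c f g h : ℝ × ℝ → ℝ} {p : ℝ × ℝ} (v : ℝ × ℝ)
    (ha : DifferentiableAt ℝ a p) (hf : DifferentiableAt ℝ f p)
    (hb : DifferentiableAt ℝ b p) (hg : DifferentiableAt ℝ g p)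
    (hc : DifferentiableAt ℝ c p) (hh : DifferentiableAt ℝ h p) :
    pdv v (fun q => a q * f q + b q * g q + c q * h q) p =
      pdv v a p * f p + a p * pdv v f p + pdv v b p * g p + b p * pdv v g p +
        pdv v c p * h p + c p * pdv v h p := by
  have H : HasFDerivAt (fun q => a q * f q + b q * g q + c q * h q)
      ((a p • fderiv ℝ f p + f p • fderiv ℝ a p) + (b p • fderiv ℝ g p + g p • fderiv ℝ b p) +
        (c p • fderiv ℝ h p + h p • fderiv ℝ c p)) p :=
    ((ha.hasFDerivAt.mul hf.hasFDerivAt).add (hb.hasFDerivAt.mul hg.hasFDerivAt)).add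
      (hc.hasFDerivAt.mul hh.hasFDerivAt)
  simp only [pdv]
  rw [H.fderiv]
  simp [ContinuousLinearMap.smul_apply, smul_eq_mul]
  ring

/-- Sum of four products rule. -/
lemma pdv_comb4 {a b c d f g h k : ℝ × ℝ → ℝ} {p : ℝ × ℝ} (v : ℝ × ℝ)
    (ha : DifferentiableAt ℝ a p) (hf : DifferentiableAt ℝ f p)
    (hb : DifferentiableAt ℝ b p) (hg : DifferentiableAt ℝ g p)
    (hc : DifferentiableAt ℝ c p) (hh : DifferentiableAt ℝ h p)
    (hd : DifferentiableAt ℝ d p) (hk : DifferentiableAt ℝ k p) :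
    pdv v (fun q => a q * f q + b q * g q + c q * h q + d q * k q) p =
      pdv v a p * f p + a p * pdv v f p + pdv v b p * g p + b p * pdv v g p +
        pdv v c p * h p + c p * pdv v h p + pdv v d p * k p + d p * pdv v k p := by
  have H : HasFDerivAt (fun q => a q * f q + b q * g q + c q * h q + d q * k q)
      (((a p • fderiv ℝ f p + f p • fderiv ℝ a p) + (b p • fderiv ℝ g p + g p • fderiv ℝ b p) +
        (c p • fderiv ℝ h p + h p • fderiv ℝ c p)) +
        (d p • fderiv ℝ k p + k p • fderiv ℝ d p)) p :=
    (((ha.hasFDerivAt.mul hf.hasFDerivAt).add (hb.hasFDerivAt.mul hg.hasFDerivAt)).add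
      (hc.hasFDerivAt.mul hh.hasFDerivAt)).add (hd.hasFDerivAt.mul hk.hasFDerivAt)
  simp only [pdv]
  rw [H.fderiv]
  simp [ContinuousLinearMap.smul_apply, smul_eq_mul]
  ring

/-- `pdv v f` is smooth on an open set where `f` is smooth. -/
lemma contDiffOn_pdv {f : ℝ × ℝ → ℝ} {U : Set (ℝ × ℝ)} (hU : IsOpen U)
    (hf : ContDiffOn ℝ (⊤ : ℕ∞) f U) (v : ℝ × ℝ) : ContDiffOn ℝ (⊤ : ℕ∞) (pdv v f) U := by
  intro p hp
  apply ContDiffAt.contDiffWithinAt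
  have h1 : ContDiffAt ℝ (⊤ : ℕ∞) (fderiv ℝ f) p :=
    (hf.contDiffAt (hU.mem_nhds hp)).fderiv_right (by simp)
  exact h1.clm_apply contDiffAt_const

lemma pdv_clm {f : ℝ × ℝ → ℝ} {p : ℝ × ℝ} (v w : ℝ × ℝ) (hf : ContDiffAt ℝ (⊤ : ℕ∞) f p) :
    pdv w (pdv v f) p = fderiv ℝ (fderiv ℝ f) p w v := by
  have hd : DifferentiableAt ℝ (fderiv ℝ f) p :=
    (hf.fderiv_right (m := 1) ((by exact WithTop.coe_le_coe.mpr le_top))).differentiableAt one_ne_zero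
  simp only [pdv]
  rw [show pdv v f = fun q => fderiv ℝ f q v from rfl,
    fderiv_clm_apply hd (differentiableAt_const v)]
  simp

/-- Clairaut. -/
lemma pdv_comm (v w : ℝ × ℝ) {f : ℝ × ℝ → ℝ} {p : ℝ × ℝ} (hf : ContDiffAt ℝ (⊤ : ℕ∞) f p) :
    pdv w (pdv v f) p = pdv v (pdv w f) p := by
  rw [pdv_clm v w hf, pdv_clm w v hf]
  exact hf.isSymmSndFDerivAt (by rw [minSmoothness_of_isRCLikeNormedField]; exact WithTop.coe_le_coe.mpr le_top) w v

/-- Contact symmetries of the hyperbolic Euler–Darboux equation: if `u` is a solution, then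
`v = (c₁(η−ξ)/2 + c₄)u + (−c₁ξ² + c₂ξ − c₃)u_ξ + (c₁η² + c₂η + c₃)u_η` is a solution. -/
theorem hypED_contact_symmetry (U : Set (ℝ × ℝ)) (hU : IsOpen U)
    (hne : ∀ p ∈ U, p.1 + p.2 ≠ 0) (c₁ c₂ c₃ c₄ : ℝ)
    (u : ℝ × ℝ → ℝ) (hu : IsHypEDSolution U u) :
    IsHypEDSolution U (fun p =>
      (c₁ * (p.2 - p.1) / 2 + c₄) * u p +
        (-c₁ * p.1 ^ 2 + c₂ * p.1 - c₃) * px u p +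
        (c₁ * p.2 ^ 2 + c₂ * p.2 + c₃) * py u p) := by
  obtain ⟨hus, hup⟩ := hu
  simp only [px, py] at hup ⊢
  have s1 : ContDiffOn ℝ (⊤ : ℕ∞) (pdv (1, 0) u) U := contDiffOn_pdv hU hus _
  have s2 : ContDiffOn ℝ (⊤ : ℕ∞) (pdv (0, 1) u) U := contDiffOn_pdv hU hus _
  have s11 : ContDiffOn ℝ (⊤ : ℕ∞) (pdv (1, 0) (pdv (1, 0) u)) U := contDiffOn_pdv hU s1 _
  have s12 : ContDiffOn ℝ (⊤ : ℕ∞) (pdv (0, 1) (pdv (1, 0) u)) U := contDiffOn_pdv hU s1 _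
  have s21 : ContDiffOn ℝ (⊤ : ℕ∞) (pdv (1, 0) (pdv (0, 1) u)) U := contDiffOn_pdv hU s2 _
  have s22 : ContDiffOn ℝ (⊤ : ℕ∞) (pdv (0, 1) (pdv (0, 1) u)) U := contDiffOn_pdv hU s2 _
  have dAt : ∀ {f : ℝ × ℝ → ℝ}, ContDiffOn ℝ (⊤ : ℕ∞) f U → ∀ {q}, q ∈ U →
      DifferentiableAt ℝ f q := by
    intro f hf q hq
    exact (hf.contDiffAt (hU.mem_nhds hq)).differentiableAt (by simp)
  have hca : ContDiff ℝ (⊤ : ℕ∞) (fun q : ℝ × ℝ => c₁ * (q.2 - q.1) / 2 + c₄) := by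
    exact ((contDiff_const.mul (contDiff_snd.sub contDiff_fst)).div_const 2).add contDiff_const
  have hcb : ContDiff ℝ (⊤ : ℕ∞) (fun q : ℝ × ℝ => -c₁ * q.1 ^ 2 + c₂ * q.1 - c₃) := by
    exact ((contDiff_const.mul (contDiff_fst.pow 2)).add
      (contDiff_const.mul contDiff_fst)).sub contDiff_const
  have hcc : ContDiff ℝ (⊤ : ℕ∞) (fun q : ℝ × ℝ => c₁ * q.2 ^ 2 + c₂ * q.2 + c₃) := by
    exact ((contDiff_const.mul (contDiff_snd.pow 2)).add
      (contDiff_const.mul contDiff_snd)).add contDiff_const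
  constructor
  · exact ((hca.contDiffOn.mul hus).add (hcb.contDiffOn.mul s1)).add (hcc.contDiffOn.mul s2)
  intro p hp
  simp only [px, py]
  have hnp : U ∈ nhds p := hU.mem_nhds hp
  -- coefficient derivatives
  have hax : ∀ v q : ℝ × ℝ, pdv v (fun r : ℝ × ℝ => c₁ * (r.2 - r.1) / 2 + c₄) q =
      -(c₁ / 2) * v.1 + (c₁ / 2) * v.2 := by
    intro v q
    rw [show (fun r : ℝ × ℝ => c₁ * (r.2 - r.1) / 2 + c₄) =
      (fun r : ℝ × ℝ => 0 * (r.1 * r.1) + 0 * (r.2 * r.2) + (-(c₁ / 2)) * r.1 +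
        (c₁ / 2) * r.2 + c₄) from by funext r; ring, pdv_poly2]
    ring
  have hbx : ∀ v q : ℝ × ℝ, pdv v (fun r : ℝ × ℝ => -c₁ * r.1 ^ 2 + c₂ * r.1 - c₃) q =
      (-(2 * c₁ * q.1) + c₂) * v.1 := by
    intro v q
    rw [show (fun r : ℝ × ℝ => -c₁ * r.1 ^ 2 + c₂ * r.1 - c₃) =
      (fun r : ℝ × ℝ => (-c₁) * (r.1 * r.1) + 0 * (r.2 * r.2) + c₂ * r.1 +
        0 * r.2 + (-c₃)) from by funext r; ring, pdv_poly2]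
    ring
  have hccx : ∀ v q : ℝ × ℝ, pdv v (fun r : ℝ × ℝ => c₁ * r.2 ^ 2 + c₂ * r.2 + c₃) q =
      (2 * c₁ * q.2 + c₂) * v.2 := by
    intro v q
    rw [show (fun r : ℝ × ℝ => c₁ * r.2 ^ 2 + c₂ * r.2 + c₃) =
      (fun r : ℝ × ℝ => 0 * (r.1 * r.1) + c₁ * (r.2 * r.2) + 0 * r.1 +
        c₂ * r.2 + c₃) from by funext r; ring, pdv_poly2]
    ring
  have hA2 : ∀ v q : ℝ × ℝ, pdv v
      (fun r : ℝ × ℝ => c₁ * (r.2 - r.1) / 2 + c₄ + (-(2 * c₁ * r.1) + c₂)) q =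
      (-(c₁ / 2) - 2 * c₁) * v.1 + (c₁ / 2) * v.2 := by
    intro v q
    rw [show (fun r : ℝ × ℝ => c₁ * (r.2 - r.1) / 2 + c₄ + (-(2 * c₁ * r.1) + c₂)) =
      (fun r : ℝ × ℝ => 0 * (r.1 * r.1) + 0 * (r.2 * r.2) + (-(c₁ / 2) - 2 * c₁) * r.1 +
        (c₁ / 2) * r.2 + (c₄ + c₂)) from by funext r; ring, pdv_poly2]
    ring
  have hs2 : ∀ v q : ℝ × ℝ, pdv v (fun r : ℝ × ℝ => 2 * (r.1 + r.2)) q =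
      2 * v.1 + 2 * v.2 := by
    intro v q
    rw [show (fun r : ℝ × ℝ => 2 * (r.1 + r.2)) =
      (fun r : ℝ × ℝ => 0 * (r.1 * r.1) + 0 * (r.2 * r.2) + 2 * r.1 +
        2 * r.2 + 0) from by funext r; ring, pdv_poly2]
    ring
  -- derivatives of V on U
  have hA : ∀ q ∈ U, pdv (1, 0) (fun p : ℝ × ℝ =>
      (c₁ * (p.2 - p.1) / 2 + c₄) * u p +
        (-c₁ * p.1 ^ 2 + c₂ * p.1 - c₃) * pdv (1, 0) u p +
        (c₁ * p.2 ^ 2 + c₂ * p.2 + c₃) * pdv (0, 1) u p) q =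
      (-(c₁ / 2)) * u q +
        (c₁ * (q.2 - q.1) / 2 + c₄ + (-(2 * c₁ * q.1) + c₂)) * pdv (1, 0) u q +
        (-c₁ * q.1 ^ 2 + c₂ * q.1 - c₃) * pdv (1, 0) (pdv (1, 0) u) q +
        (c₁ * q.2 ^ 2 + c₂ * q.2 + c₃) * pdv (1, 0) (pdv (0, 1) u) q := by
    intro q hq
    have h0 := pdv_comb3 (1, 0) (hca.differentiable (by simp) q) (dAt hus hq)
      (hcb.differentiable (by simp) q) (dAt s1 hq)
      (hcc.differentiable (by simp) q) (dAt s2 hq)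
    rw [h0, hax, hbx, hccx]
    norm_num
    try ring
  have hB : pdv (0, 1) (fun p : ℝ × ℝ =>
      (c₁ * (p.2 - p.1) / 2 + c₄) * u p +
        (-c₁ * p.1 ^ 2 + c₂ * p.1 - c₃) * pdv (1, 0) u p +
        (c₁ * p.2 ^ 2 + c₂ * p.2 + c₃) * pdv (0, 1) u p) p =
      (c₁ / 2) * u p + (c₁ * (p.2 - p.1) / 2 + c₄) * pdv (0, 1) u p +
        (-c₁ * p.1 ^ 2 + c₂ * p.1 - c₃) * pdv (0, 1) (pdv (1, 0) u) p +
        (2 * c₁ * p.2 + c₂) * pdv (0, 1) u p +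
        (c₁ * p.2 ^ 2 + c₂ * p.2 + c₃) * pdv (0, 1) (pdv (0, 1) u) p := by
    have h0 := pdv_comb3 (0, 1) (hca.differentiable (by simp) p) (dAt hus hp)
      (hcb.differentiable (by simp) p) (dAt s1 hp)
      (hcc.differentiable (by simp) p) (dAt s2 hp)
    rw [h0, hax, hbx, hccx]
    norm_num
    try ring
  -- symmetry facts
  have hsym : ∀ q ∈ U, pdv (1, 0) (pdv (0, 1) u) q = pdv (0, 1) (pdv (1, 0) u) q :=
    fun q hq => pdv_comm (0, 1) (1, 0) (hus.contDiffAt (hU.mem_nhds hq))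
  have h3a : pdv (0, 1) (pdv (1, 0) (pdv (1, 0) u)) p =
      pdv (1, 0) (pdv (0, 1) (pdv (1, 0) u)) p :=
    pdv_comm (1, 0) (0, 1) (s1.contDiffAt hnp)
  have h3b : pdv (0, 1) (pdv (1, 0) (pdv (0, 1) u)) p =
      pdv (0, 1) (pdv (0, 1) (pdv (1, 0) u)) p :=
    pdv_congr_nhds _ (Filter.eventuallyEq_of_mem hnp hsym)
  -- second derivative of V
  have hAev : pdv (1, 0) (fun p : ℝ × ℝ =>
      (c₁ * (p.2 - p.1) / 2 + c₄) * u p +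
        (-c₁ * p.1 ^ 2 + c₂ * p.1 - c₃) * pdv (1, 0) u p +
        (c₁ * p.2 ^ 2 + c₂ * p.2 + c₃) * pdv (0, 1) u p) =ᶠ[nhds p]
      (fun q => (-(c₁ / 2)) * u q +
        (c₁ * (q.2 - q.1) / 2 + c₄ + (-(2 * c₁ * q.1) + c₂)) * pdv (1, 0) u q +
        (-c₁ * q.1 ^ 2 + c₂ * q.1 - c₃) * pdv (1, 0) (pdv (1, 0) u) q +
        (c₁ * q.2 ^ 2 + c₂ * q.2 + c₃) * pdv (1, 0) (pdv (0, 1) u) q) :=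
    Filter.eventuallyEq_of_mem hnp hA
  have hC : pdv (0, 1) (pdv (1, 0) (fun p : ℝ × ℝ =>
      (c₁ * (p.2 - p.1) / 2 + c₄) * u p +
        (-c₁ * p.1 ^ 2 + c₂ * p.1 - c₃) * pdv (1, 0) u p +
        (c₁ * p.2 ^ 2 + c₂ * p.2 + c₃) * pdv (0, 1) u p)) p =
      (c₁ / 2) * pdv (1, 0) u p + (-(c₁ / 2)) * pdv (0, 1) u p +
        (c₁ * (p.2 - p.1) / 2 + c₄ + (-(2 * c₁ * p.1) + c₂)) * pdv (0, 1) (pdv (1, 0) u) p +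
        (-c₁ * p.1 ^ 2 + c₂ * p.1 - c₃) * pdv (1, 0) (pdv (0, 1) (pdv (1, 0) u)) p +
        (2 * c₁ * p.2 + c₂) * pdv (0, 1) (pdv (1, 0) u) p +
        (c₁ * p.2 ^ 2 + c₂ * p.2 + c₃) * pdv (0, 1) (pdv (0, 1) (pdv (1, 0) u)) p := by
    rw [pdv_congr_nhds _ hAev]
    have h0 := pdv_comb4 (0, 1)
      (differentiableAt_const (-(c₁ / 2))) (dAt hus hp)
      (show DifferentiableAt ℝ
        (fun r : ℝ × ℝ => c₁ * (r.2 - r.1) / 2 + c₄ + (-(2 * c₁ * r.1) + c₂)) p from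
        ((hca.differentiable (by simp)).add (by fun_prop)).differentiableAt (x := p))
      (dAt s1 hp)
      (hcb.differentiable (by simp) p) (dAt s11 hp)
      (hcc.differentiable (by simp) p) (dAt s21 hp)
    rw [h0, pdv_const, hA2, hbx, hccx, h3a, h3b, hsym p hp]
    norm_num
    try ring
  -- derivatives of the PDE
  have hEev : (fun q : ℝ × ℝ => 2 * (q.1 + q.2) * pdv (0, 1) (pdv (1, 0) u) q +
      (1 : ℝ) * pdv (1, 0) u q + (1 : ℝ) * pdv (0, 1) u q) =ᶠ[nhds p]
      (fun _ => (0 : ℝ)) := by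
    filter_upwards [hnp] with q hq
    have := hup q hq
    linarith
  have hEx : 2 * pdv (0, 1) (pdv (1, 0) u) p +
      2 * (p.1 + p.2) * pdv (1, 0) (pdv (0, 1) (pdv (1, 0) u)) p +
      pdv (1, 0) (pdv (1, 0) u) p + pdv (0, 1) (pdv (1, 0) u) p = 0 := by
    have h0 := pdv_comb3 (1, 0)
      (by fun_prop : DifferentiableAt ℝ (fun r : ℝ × ℝ => 2 * (r.1 + r.2)) p)
      (dAt s12 hp)
      (differentiableAt_const (1 : ℝ)) (dAt s1 hp)
      (differentiableAt_const (1 : ℝ)) (dAt s2 hp)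
    rw [pdv_congr_nhds _ hEev, pdv_const] at h0
    rw [hs2, pdv_const, hsym p hp] at h0
    norm_num at h0
    linarith [h0]
  have hEy : 2 * pdv (0, 1) (pdv (1, 0) u) p +
      2 * (p.1 + p.2) * pdv (0, 1) (pdv (0, 1) (pdv (1, 0) u)) p +
      pdv (0, 1) (pdv (1, 0) u) p + pdv (0, 1) (pdv (0, 1) u) p = 0 := by
    have h0 := pdv_comb3 (0, 1)
      (by fun_prop : DifferentiableAt ℝ (fun r : ℝ × ℝ => 2 * (r.1 + r.2)) p)
      (dAt s12 hp)
      (differentiableAt_const (1 : ℝ)) (dAt s1 hp)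
      (differentiableAt_const (1 : ℝ)) (dAt s2 hp)
    rw [pdv_congr_nhds _ hEev, pdv_const] at h0
    rw [hs2, pdv_const] at h0
    norm_num at h0
    linarith [h0]
  -- final assembly
  rw [hC, hA p hp, hB, hsym p hp]
  linear_combination (3 / 2 * c₁ * (p.2 - p.1) + c₂ + c₄) * hup p hp +
    (-c₁ * p.1 ^ 2 + c₂ * p.1 - c₃) * hEx + (c₁ * p.2 ^ 2 + c₂ * p.2 + c₃) * hEy
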